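/- arXiv:2311.06290 — 3 statements merged into one kernel-verified Lean document; each statement's English description precedes it below -/
import Mathlib

section
/- For every rational t with t ≠ 0 and t^2 ≠ 1, the four points P1 = (128t^6, 0), P2 = (32(t-1)^2(t+1)^2 t^4, 8t^2(t^8 - 6t^6 + 6t^2 - 1)), P3 = (8(t-1)^4(t+1)^4 t^2, 4t(t^{10} - 7t^8 + 6t^6 + 6t^4 - 7t^2 + 1)), P4 = (2(t-1)^6(t+1)^6, 0) all lie on the circle (x-h)^2 + y^2 = a^2 where h = (t^8 - 8t^6 + 30t^4 - 8t^2 + 1)(t^2+1)^2 and a = t^{12} - 6t^{10} + 15t^8 - 84t^6 + 15t^4 - 6t^2 + 1, and their abscissae form a geometric progression with common ratio r = (t^2-1)^2/(4t^2). -/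
theorem stmt_6 (t : ℚ) (ht : t ≠ 0) (ht2 : t^2 ≠ 1) :
    let h : ℚ := (t^8 - 8*t^6 + 30*t^4 - 8*t^2 + 1) * (t^2 + 1)^2
    let a : ℚ := t^12 - 6*t^10 + 15*t^8 - 84*t^6 + 15*t^4 - 6*t^2 + 1
    let r : ℚ := (t^2 - 1)^2 / (4*t^2)
    let x1 : ℚ := 128*t^6
    let y1 : ℚ := 0
    let x2 : ℚ := 32*(t - 1)^2*(t + 1)^2*t^4
    let y2 : ℚ := 8*t^2*(t^8 - 6*t^6 + 6*t^2 - 1)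
    let x3 : ℚ := 8*(t - 1)^4*(t + 1)^4*t^2
    let y3 : ℚ := 4*t*(t^10 - 7*t^8 + 6*t^6 + 6*t^4 - 7*t^2 + 1)
    let x4 : ℚ := 2*(t - 1)^6*(t + 1)^6
    let y4 : ℚ := 0
    (x1 - h)^2 + y1^2 = a^2 ∧ (x2 - h)^2 + y2^2 = a^2 ∧
    (x3 - h)^2 + y3^2 = a^2 ∧ (x4 - h)^2 + y4^2 = a^2 ∧
    x2 = r * x1 ∧ x3 = r * x2 ∧ x4 = r * x3 := by
  intro h a r x1 y1 x2 y2 x3 y3 x4 y4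
  refine ⟨by ring, by ring, by ring, by ring, ?_, ?_, ?_⟩ <;>
    simp only [h, a, r, x1, x2, x3, x4] <;> field_simp <;> ring
end

section
/- There exist infinitely many rationals t such that the four points (128t^6, 0), (32(t-1)^2(t+1)^2 t^4, 8t^2(t^8-6t^6+6t^2-1)), (8(t-1)^4(t+1)^4 t^2, 4t(t^{10}-7t^8+6t^6+6t^4-7t^2+1)), (2(t-1)^6(t+1)^6, 0) are four distinct points on a circle with rational center on the x-axis and rational radius, with abscissae in geometric progression with common ratio strictly greater than 1. -/
theorem stmt_7 :
    {t : ℚ | ∃ h a r : ℚ,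
      let x1 : ℚ := 128*t^6
      let y1 : ℚ := 0
      let x2 : ℚ := 32*(t - 1)^2*(t + 1)^2*t^4
      let y2 : ℚ := 8*t^2*(t^8 - 6*t^6 + 6*t^2 - 1)
      let x3 : ℚ := 8*(t - 1)^4*(t + 1)^4*t^2
      let y3 : ℚ := 4*t*(t^10 - 7*t^8 + 6*t^6 + 6*t^4 - 7*t^2 + 1)
      let x4 : ℚ := 2*(t - 1)^6*(t + 1)^6
      let y4 : ℚ := 0
      ((x1, y1) : ℚ × ℚ) ≠ (x2, y2) ∧ (x1, y1) ≠ (x3, y3) ∧ (x1, y1) ≠ (x4, y4) ∧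
      (x2, y2) ≠ (x3, y3) ∧ (x2, y2) ≠ (x4, y4) ∧ (x3, y3) ≠ (x4, y4) ∧
      (x1 - h)^2 + y1^2 = a^2 ∧ (x2 - h)^2 + y2^2 = a^2 ∧
      (x3 - h)^2 + y3^2 = a^2 ∧ (x4 - h)^2 + y4^2 = a^2 ∧
      r > 1 ∧ x2 = r * x1 ∧ x3 = r * x2 ∧ x4 = r * x3}.Infinite := by
  have key : ∀ t : ℚ, 3 ≤ t → t ∈ {t : ℚ | ∃ h a r : ℚ,
      let x1 : ℚ := 128*t^6
      let y1 : ℚ := 0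
      let x2 : ℚ := 32*(t - 1)^2*(t + 1)^2*t^4
      let y2 : ℚ := 8*t^2*(t^8 - 6*t^6 + 6*t^2 - 1)
      let x3 : ℚ := 8*(t - 1)^4*(t + 1)^4*t^2
      let y3 : ℚ := 4*t*(t^10 - 7*t^8 + 6*t^6 + 6*t^4 - 7*t^2 + 1)
      let x4 : ℚ := 2*(t - 1)^6*(t + 1)^6
      let y4 : ℚ := 0
      ((x1, y1) : ℚ × ℚ) ≠ (x2, y2) ∧ (x1, y1) ≠ (x3, y3) ∧ (x1, y1) ≠ (x4, y4) ∧
      (x2, y2) ≠ (x3, y3) ∧ (x2, y2) ≠ (x4, y4) ∧ (x3, y3) ≠ (x4, y4) ∧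
      (x1 - h)^2 + y1^2 = a^2 ∧ (x2 - h)^2 + y2^2 = a^2 ∧
      (x3 - h)^2 + y3^2 = a^2 ∧ (x4 - h)^2 + y4^2 = a^2 ∧
      r > 1 ∧ x2 = r * x1 ∧ x3 = r * x2 ∧ x4 = r * x3} := by
    intro t ht3
    have ht0 : (0 : ℚ) < t := by linarith
    simp only [Set.mem_setOf_eq]
    refine ⟨64*t^6 + (t^2-1)^6, 64*t^6 - (t^2-1)^6, (t^2-1)^2/(4*t^2), ?_⟩
    have hr1 : (t^2-1)^2/(4*t^2) > 1 := by
      rw [gt_iff_lt, lt_div_iff₀ (by positivity)]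
      have h1 : (0:ℚ) < t^2 - 2*t - 1 := by nlinarith
      have h2 : (0:ℚ) < t^2 + 2*t - 1 := by nlinarith
      nlinarith [mul_pos h1 h2]
    have hx1 : (0:ℚ) < (128*t^6 : ℚ) := by positivity
    have h21 : (32*(t - 1)^2*(t + 1)^2*t^4 : ℚ) = (t^2-1)^2/(4*t^2) * (128*t^6 : ℚ) := by
      field_simp
      ring
    have h32 : (8*(t - 1)^4*(t + 1)^4*t^2 : ℚ) = (t^2-1)^2/(4*t^2) * (32*(t - 1)^2*(t + 1)^2*t^4 : ℚ) := by
      field_simp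
      ring
    have h43 : (2*(t - 1)^6*(t + 1)^6 : ℚ) = (t^2-1)^2/(4*t^2) * (8*(t - 1)^4*(t + 1)^4*t^2 : ℚ) := by
      field_simp
      ring
    have hx12 : (128*t^6 : ℚ) < (32*(t - 1)^2*(t + 1)^2*t^4 : ℚ) := by
      rw [h21]; nlinarith
    have hx23 : (32*(t - 1)^2*(t + 1)^2*t^4 : ℚ) < (8*(t - 1)^4*(t + 1)^4*t^2 : ℚ) := by
      have hx2 : (0:ℚ) < (32*(t - 1)^2*(t + 1)^2*t^4 : ℚ) := lt_trans hx1 hx12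
      rw [h32]; nlinarith
    have hx34 : (8*(t - 1)^4*(t + 1)^4*t^2 : ℚ) < (2*(t - 1)^6*(t + 1)^6 : ℚ) := by
      have hx3 : (0:ℚ) < (8*(t - 1)^4*(t + 1)^4*t^2 : ℚ) := lt_trans (lt_trans hx1 hx12) hx23
      rw [h43]; nlinarith
    refine ⟨?_, ?_, ?_, ?_, ?_, ?_, ?_, ?_, ?_, ?_, hr1, h21, h32, h43⟩
    · exact fun h => absurd (congrArg Prod.fst h) (ne_of_lt hx12)
    · exact fun h => absurd (congrArg Prod.fst h) (ne_of_lt (hx12.trans hx23))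
    · exact fun h => absurd (congrArg Prod.fst h) (ne_of_lt ((hx12.trans hx23).trans hx34))
    · exact fun h => absurd (congrArg Prod.fst h) (ne_of_lt hx23)
    · exact fun h => absurd (congrArg Prod.fst h) (ne_of_lt (hx23.trans hx34))
    · exact fun h => absurd (congrArg Prod.fst h) (ne_of_lt hx34)
    · show (128*t^6 - (64*t^6 + (t^2-1)^6))^2 + (0:ℚ)^2 = (64*t^6 - (t^2-1)^6)^2; ring
    · show (32*(t - 1)^2*(t + 1)^2*t^4 - (64*t^6 + (t^2-1)^6))^2
          + (8*t^2*(t^8 - 6*t^6 + 6*t^2 - 1))^2 = (64*t^6 - (t^2-1)^6)^2; ring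
    · show (8*(t - 1)^4*(t + 1)^4*t^2 - (64*t^6 + (t^2-1)^6))^2
          + (4*t*(t^10 - 7*t^8 + 6*t^6 + 6*t^4 - 7*t^2 + 1))^2 = (64*t^6 - (t^2-1)^6)^2; ring
    · show (2*(t - 1)^6*(t + 1)^6 - (64*t^6 + (t^2-1)^6))^2 + (0:ℚ)^2 = (64*t^6 - (t^2-1)^6)^2; ring
  refine Set.infinite_of_injective_forall_mem (f := fun n : ℕ => (n : ℚ) + 3) ?_ ?_
  · intro a b hab
    simpa using hab
  · intro n
    have h3 : (3:ℚ) ≤ (n:ℚ) + 3 := by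
      have : (0:ℚ) ≤ (n:ℚ) := Nat.cast_nonneg n
      linarith
    exact key _ h3
end

section
/- Let r be a rational with r ≠ 1, let a be a nonzero rational, and let u_1, u_2, u_3, u_4 be rationals. If h is a rational satisfying the three equations (u_i^2+1)(u_{i+1}^2+1)(r-1)h + 2a(r u_i u_{i+1}^2 - u_i^2 u_{i+1} + r u_i - u_{i+1}) = 0 for i = 1, 2, 3, then the four points x_i = h + 2a u_i/(u_i^2+1), i = 1,...,4, satisfy x_{i+1} = r x_i for i = 1, 2, 3, i.e., the abscissae are in geometric progression with ratio r. -/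
theorem stmt_18 (r a h : ℚ) (hr : r ≠ 1) (ha : a ≠ 0) (u : Fin 4 → ℚ)
    (heq : ∀ i : Fin 3, (u i.castSucc ^ 2 + 1) * (u i.succ ^ 2 + 1) * (r - 1) * h +
      2 * a * (r * u i.castSucc * u i.succ ^ 2 - u i.castSucc ^ 2 * u i.succ +
        r * u i.castSucc - u i.succ) = 0) :
    ∀ i : Fin 3, h + 2 * a * u i.succ / (u i.succ ^ 2 + 1) =
      r * (h + 2 * a * u i.castSucc / (u i.castSucc ^ 2 + 1)) := by
  intro i
  have h1 := heq i
  have d1 : u i.castSucc ^ 2 + 1 ≠ 0 := by positivity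
  have d2 : u i.succ ^ 2 + 1 ≠ 0 := by positivity
  field_simp
  linear_combination -h1
end
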